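/- arXiv:2507.11365 — 6 statements merged into one kernel-verified Lean document; each statement's English description precedes it below -/
import Mathlib

section
/- Let V be a finite-dimensional complex vector space, and let T_a(x) = x + α_a(x)v_a and T_b(x) = x + α_b(x)v_b be linear maps with α_a(v_a) = α_b(v_b) = 0. Suppose v_a and v_b are linearly independent and α_a is not identically zero. If T_a T_b T_a = T_b T_a T_b (the braid relation), then α_a(v_b)·α_b(v_a) = -1. -/
/-- Braid relation forces `α_a(v_b) · α_b(v_a) = -1` for transvection-like maps. -/
theorem braid_relation_pairing {V : Type*} [AddCommGroup V] [Module ℂ V]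
    [FiniteDimensional ℂ V]
    (αa αb : V →ₗ[ℂ] ℂ) (va vb : V)
    (ha : αa va = 0) (hb : αb vb = 0)
    (hLI : LinearIndependent ℂ ![va, vb]) (hαa : αa ≠ 0)
    (Ta Tb : V → V)
    (hTa : ∀ x, Ta x = x + αa x • va) (hTb : ∀ x, Tb x = x + αb x • vb)
    (hbraid : ∀ x, Ta (Tb (Ta x)) = Tb (Ta (Tb x))) :
    αa vb * αb va = -1 := by
  obtain ⟨x, hx⟩ : ∃ x, αa x ≠ 0 := by
    by_contra h
    push_neg at h
    exact hαa (LinearMap.ext fun y => h y)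
  have hbx := hbraid x
  simp only [hTa, hTb, map_add, map_smul, ha, hb, smul_eq_mul, mul_zero, add_zero,
    smul_add, smul_smul] at hbx
  obtain ⟨a, ha'⟩ : ∃ c, αa x = c := ⟨_, rfl⟩
  obtain ⟨b, hb'⟩ : ∃ c, αb x = c := ⟨_, rfl⟩
  obtain ⟨A, hA⟩ : ∃ c, αa vb = c := ⟨_, rfl⟩
  obtain ⟨B, hB⟩ : ∃ c, αb va = c := ⟨_, rfl⟩
  simp only [ha', hb', hA, hB] at hbx hx ⊢
  have key : (a + a * (A * B)) • va + (-(b + b * (A * B))) • vb = 0 := by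
    linear_combination (norm := module) hbx
  rw [LinearIndependent.pair_iff] at hLI
  obtain ⟨h1, _⟩ := hLI _ _ key
  have h2 : a * (1 + A * B) = 0 := by linear_combination h1
  rcases mul_eq_zero.mp h2 with h | h
  · exact absurd h hx
  · linear_combination h
end

section
/- Let V be a complex vector space with linear maps T_1, ..., T_{2k} of the form T_i(x) = x + α_i(x)v_i with α_i(v_i) = 0, where α_i(v_{i+1}) = 1, α_{i+1}(v_i) = -1 for 1 ≤ i ≤ 2k-1, and α_i(v_j) = 0 whenever |i - j| > 1. Assume each α_i(v_{i±1}) is as stated and each v_i ≠ 0. Then the vectors v_1, ..., v_{2k} are linearly independent. -/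
/-- Normalized chain of transvection vectors: if `α_i (v_i) = 0`,
`α_i (v_{i+1}) = 1`, `α_{i+1} (v_i) = -1`, and `α_i (v_j) = 0` for `|i - j| > 1`,
with each `v_i ≠ 0`, then `v_1, …, v_{2k}` are linearly independent. -/
theorem chain_vectors_linearIndependent {V : Type*} [AddCommGroup V] [Module ℂ V]
    (k : ℕ) (v : Fin (2 * k) → V) (α : Fin (2 * k) → (V →ₗ[ℂ] ℂ))
    (hdiag : ∀ i, α i (v i) = 0)
    (hup : ∀ i j : Fin (2 * k), (i : ℕ) + 1 = (j : ℕ) → α i (v j) = 1)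
    (hdown : ∀ i j : Fin (2 * k), (i : ℕ) + 1 = (j : ℕ) → α j (v i) = -1)
    (hfar : ∀ i j : Fin (2 * k), (i : ℕ) + 1 < (j : ℕ) ∨ (j : ℕ) + 1 < (i : ℕ) →
      α i (v j) = 0)
    (hne : ∀ i, v i ≠ 0) :
    LinearIndependent ℂ v := by
  rw [Fintype.linearIndependent_iff]
  intro g hg
  have hS : ∀ i : Fin (2 * k), ∑ j, g j * α i (v j) = 0 := by
    intro i
    have := congrArg (α i) hg
    simpa [map_sum, map_smul, smul_eq_mul] using this
  -- interior relation : g c = g a when a+1 = b, b+1 = c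
  have step : ∀ a b c : Fin (2 * k), (a : ℕ) + 1 = (b : ℕ) → (b : ℕ) + 1 = (c : ℕ) →
      g c = g a := by
    intro a b c hab hbc
    have hterm : ∀ j : Fin (2 * k), g j * α b (v j)
        = (if j = c then g c else 0) - (if j = a then g a else 0) := by
      intro j
      by_cases hjc : j = c
      · subst hjc
        have hja : j ≠ a := by intro h; subst h; omega
        rw [hup b j hbc]
        simp [hja]
      · by_cases hja : j = a
        · subst hja
          rw [hdown j b hab]
          simp [hjc]
        · have h1 : (j : ℕ) ≠ (a : ℕ) := fun h => hja (Fin.ext h)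
          have h2 : (j : ℕ) ≠ (c : ℕ) := fun h => hjc (Fin.ext h)
          by_cases hjb : j = b
          · subst hjb
            rw [hdiag j]
            simp [hja, hjc]
          · have h3 : (j : ℕ) ≠ (b : ℕ) := fun h => hjb (Fin.ext h)
            rw [hfar b j (by omega)]
            simp [hja, hjc]
    have h := hS b
    rw [Finset.sum_congr rfl (fun j _ => hterm j)] at h
    simp [Finset.sum_sub_distrib, Finset.sum_ite_eq'] at h
    linear_combination h
  -- first relation : g at index 1 is zero
  have first : ∀ b c : Fin (2 * k), (b : ℕ) = 0 → (c : ℕ) = 1 → g c = 0 := by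
    intro b c hb hc
    have hterm : ∀ j : Fin (2 * k), g j * α b (v j)
        = (if j = c then g c else 0) := by
      intro j
      by_cases hjc : j = c
      · subst hjc
        rw [hup b j (by omega)]
        simp
      · have h2 : (j : ℕ) ≠ (c : ℕ) := fun h => hjc (Fin.ext h)
        by_cases hjb : j = b
        · subst hjb
          rw [hdiag j]
          simp [hjc]
        · have h3 : (j : ℕ) ≠ (b : ℕ) := fun h => hjb (Fin.ext h)
          rw [hfar b j (by omega)]
          simp [hjc]
    have h := hS b
    rw [Finset.sum_congr rfl (fun j _ => hterm j)] at h
    simpa [Finset.sum_ite_eq'] using h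
  -- last relation : g at index 2k-2 is zero
  have last : ∀ a b : Fin (2 * k), (a : ℕ) + 1 = (b : ℕ) → (b : ℕ) = 2 * k - 1 →
      g a = 0 := by
    intro a b hab hb
    have hterm : ∀ j : Fin (2 * k), g j * α b (v j)
        = -(if j = a then g a else 0) := by
      intro j
      by_cases hja : j = a
      · subst hja
        rw [hdown j b hab]
        simp
      · have h1 : (j : ℕ) ≠ (a : ℕ) := fun h => hja (Fin.ext h)
        by_cases hjb : j = b
        · subst hjb
          rw [hdiag j]
          simp [hja]
        · have h3 : (j : ℕ) ≠ (b : ℕ) := fun h => hjb (Fin.ext h)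
          have hub : (j : ℕ) < 2 * k := j.isLt
          rw [hfar b j (by omega)]
          simp [hja]
    have h := hS b
    rw [Finset.sum_congr rfl (fun j _ => hterm j)] at h
    simp [Finset.sum_ite_eq'] at h
    exact h
  intro i
  have hkpos : 0 < 2 * k := i.pos
  -- odd indices
  have odd : ∀ m : ℕ, ∀ hm : 2 * m + 1 < 2 * k, g ⟨2 * m + 1, hm⟩ = 0 := by
    intro m
    induction m with
    | zero => intro hm; exact first ⟨0, hkpos⟩ ⟨1, hm⟩ rfl rfl
    | succ n ih =>
      intro hm
      have hn : 2 * n + 1 < 2 * k := by omega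
      have hb : 2 * n + 2 < 2 * k := by omega
      have := step ⟨2 * n + 1, hn⟩ ⟨2 * n + 2, hb⟩ ⟨2 * n + 3, by omega⟩ rfl rfl
      have h2 : (⟨2 * (n + 1) + 1, hm⟩ : Fin (2 * k)) = ⟨2 * n + 3, by omega⟩ :=
        Fin.ext (by simp; omega)
      rw [h2, this]
      exact ih hn
  -- even indices, descending
  have even : ∀ m : ℕ, ∀ hm : 2 * m + 2 ≤ 2 * k, g ⟨2 * k - 2 - 2 * m, by omega⟩ = 0 := by
    intro m
    induction m with
    | zero =>
      intro hm
      have := last ⟨2 * k - 2, by omega⟩ ⟨2 * k - 1, by omega⟩ (by simp; omega) rfl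
      simpa using this
    | succ n ih =>
      intro hm
      have hn : 2 * n + 2 ≤ 2 * k := by omega
      have h := step ⟨2 * k - 2 - 2 * (n + 1), by omega⟩ ⟨2 * k - 3 - 2 * n, by omega⟩
        ⟨2 * k - 2 - 2 * n, by omega⟩ (by simp; omega) (by simp; omega)
      rw [← h]
      exact ih hn
  rcases Nat.even_or_odd (i : ℕ) with ⟨m, hmeq⟩ | ⟨m, hmeq⟩
  · -- even: i = 2m = 2k - 2 - 2 * (k - 1 - m)
    have hi : (i : ℕ) < 2 * k := i.isLt
    have hm : 2 * (k - 1 - m) + 2 ≤ 2 * k := by omega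
    have := even (k - 1 - m) hm
    have heq : i = (⟨2 * k - 2 - 2 * (k - 1 - m), by omega⟩ : Fin (2 * k)) :=
      Fin.ext (by simp; omega)
    rw [heq]; exact this
  · have hi : (i : ℕ) < 2 * k := i.isLt
    have := odd m (by omega)
    have heq : i = (⟨2 * m + 1, by omega⟩ : Fin (2 * k)) := Fin.ext (by simp; omega)
    rw [heq]; exact this
end

section
/- Let V be a complex vector space with basis elements v_a, v_b (extended to a basis) and consider the 5×5 block matrices (acting on span(v_a,v_b,v_c,v_d) plus a complementary line recorded by the last coordinate): T_a with T_a(v_b) = v_b + v_a and T_a(x) = x + α_a(x)v_a on the complement, and T_b with T_b(v_a) = v_a - v_b, T_b(v_c) = v_c + v_b, T_b(x) = x + α_b(x)v_b, where α_a(v_a) = α_b(v_b) = 0, α_a(v_b) = 1, α_b(v_a) = -1, and α_a, α_b vanish on v_c, v_d. Then (T_a² T_b)⁴ = I. -/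
/-- The genus-1 chain relation computation: for normalized transvection-like maps
`T_a x = x + α_a(x) v_a`, `T_b x = x + α_b(x) v_b` with `α_a(v_a) = α_b(v_b) = 0`,
`α_a(v_b) = 1`, `α_b(v_a) = -1`, and `α_a, α_b` vanishing on `v_c, v_d` (the rest
of the chain basis), one has `(T_a² T_b)⁴ = I`. -/
theorem genus_one_chain_relation {V : Type*} [AddCommGroup V] [Module ℂ V]
    (αa αb : V →ₗ[ℂ] ℂ) (va vb vc vd : V)
    (hLI : LinearIndependent ℂ ![va, vb, vc, vd])
    (haa : αa va = 0) (hbb : αb vb = 0)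
    (hab : αa vb = 1) (hba : αb va = -1)
    (hac : αa vc = 0) (had : αa vd = 0) (hbc : αb vc = 0) (hbd : αb vd = 0)
    (Ta Tb : V → V)
    (hTa : ∀ x, Ta x = x + αa x • va) (hTb : ∀ x, Tb x = x + αb x • vb) :
    ∀ x : V, (Ta ∘ Ta ∘ Tb)^[4] x = x := by
  intro x
  simp only [Function.iterate_succ, Function.iterate_zero, Function.comp_apply, id_eq,
    hTa, hTb, map_add, map_smul, haa, hbb, hab, hba, smul_eq_mul]
  module
end

section
/- Let V be a complex vector space, v_a, v_b, v_c, v_d linearly independent vectors, and α_a, α_b, α_c, α_d ∈ V* with α_i(v_i) = 0 for all i, α_a(v_b) = α_b(v_c) = α_c(v_d) = 1, α_b(v_a) = α_c(v_b) = α_d(v_c) = -1, and α_i(v_j) = 0 for |i - j| > 1 (indices ordered a,b,c,d). Define T_i(x) = x + α_i(x)v_i. Then (T_a² T_b T_c T_d)⁸ = I. -/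
/-- The genus-2 chain relation computation: for normalized transvection-like maps
`T_i x = x + α_i(x) v_i` (indices `a, b, c, d`) with `α_i(v_i) = 0`,
`α_a(v_b) = α_b(v_c) = α_c(v_d) = 1`, `α_b(v_a) = α_c(v_b) = α_d(v_c) = -1`,
and `α_i(v_j) = 0` for `|i - j| > 1`, one has `(T_a² T_b T_c T_d)⁸ = I`. -/
theorem genus_two_chain_relation {V : Type*} [AddCommGroup V] [Module ℂ V]
    (αa αb αc αd : V →ₗ[ℂ] ℂ) (va vb vc vd : V)
    (hLI : LinearIndependent ℂ ![va, vb, vc, vd])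
    (haa : αa va = 0) (hbb : αb vb = 0) (hcc : αc vc = 0) (hdd : αd vd = 0)
    (hab : αa vb = 1) (hbc : αb vc = 1) (hcd : αc vd = 1)
    (hba : αb va = -1) (hcb : αc vb = -1) (hdc : αd vc = -1)
    (hac : αa vc = 0) (had : αa vd = 0) (hca : αc va = 0)
    (hbd : αb vd = 0) (hda : αd va = 0) (hdb : αd vb = 0)
    (Ta Tb Tc Td : V → V)
    (hTa : ∀ x, Ta x = x + αa x • va) (hTb : ∀ x, Tb x = x + αb x • vb)
    (hTc : ∀ x, Tc x = x + αc x • vc) (hTd : ∀ x, Td x = x + αd x • vd) :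
    ∀ x : V, (Ta ∘ Ta ∘ Tb ∘ Tc ∘ Td)^[8] x = x := by
  intro x
  set a := αa x with ha
  set b := αb x with hb
  set c := αc x with hc
  set d := αd x with hd
  have step : ∀ (A B C D : ℂ) (y : V), y = x + A • va + B • vb + C • vc + D • vd →
      (Ta ∘ Ta ∘ Tb ∘ Tc ∘ Td) y
      = x + (2*a + 2*b + 2*c + 2*d - A + 2*D) • va
          + (b + c + d - A + D) • vb
          + (c + d - B + D) • vc
          + (d - C + D) • vd := by
    intro A B C D y hy
    simp only [Function.comp_apply, hTa, hTb, hTc, hTd, hy, map_add, map_smul, smul_eq_mul,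
      haa, hbb, hcc, hdd, hab, hbc, hcd, hba, hcb, hdc, hac, had, hca, hbd, hda, hdb,
      ← ha, ← hb, ← hc, ← hd]
    module
  have h1 := step 0 0 0 0 x (by module)
  have h2 := step _ _ _ _ _ h1
  have h3 := step _ _ _ _ _ h2
  have h4 := step _ _ _ _ _ h3
  have h5 := step _ _ _ _ _ h4
  have h6 := step _ _ _ _ _ h5
  have h7 := step _ _ _ _ _ h6
  have h8 := step _ _ _ _ _ h7
  show (Ta ∘ Ta ∘ Tb ∘ Tc ∘ Td)^[8] x = x
  simp only [Function.iterate_succ', Function.iterate_zero, Function.comp_apply, id_eq] at *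
  rw [h8]
  module
end

section
/- Let G be a group generated by a set S of elements, each of which acts unipotently under a representation ρ: G → GL(n, C). Then the Zariski closure of ρ(G) in GL(n, C) is connected. -/
open MvPolynomial TopologicalSpace

/-- The Zariski topology on `n × n` complex matrices: closed sets are generated by
zero loci of polynomials in the matrix entries. -/
def matrixZariskiTopology (n : ℕ) : TopologicalSpace (Matrix (Fin n) (Fin n) ℂ) :=
  TopologicalSpace.generateFrom
    {U | ∃ p : MvPolynomial (Fin n × Fin n) ℂ,
      U = {A | MvPolynomial.eval (fun ij => A ij.1 ij.2) p ≠ 0}}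


namespace ZarAux

variable {n : ℕ}

abbrev Mat (n : ℕ) := Matrix (Fin n) (Fin n) ℂ

noncomputable def mev (A : Mat n) (p : MvPolynomial (Fin n × Fin n) ℂ) : ℂ :=
  MvPolynomial.eval (fun ij => A ij.1 ij.2) p

lemma basic_open (p : MvPolynomial (Fin n × Fin n) ℂ) :
    @IsOpen _ (matrixZariskiTopology n) {A : Mat n | mev A p ≠ 0} :=
  TopologicalSpace.GenerateOpen.basic _ ⟨p, rfl⟩

lemma exists_basic_nhd' {U : Set (Mat n)}
    (hU' : TopologicalSpace.GenerateOpen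
      {U : Set (Mat n) | ∃ p : MvPolynomial (Fin n × Fin n) ℂ,
        U = {A | MvPolynomial.eval (fun ij => A ij.1 ij.2) p ≠ 0}} U) :
    ∀ B ∈ U, ∃ p : MvPolynomial (Fin n × Fin n) ℂ,
      mev B p ≠ 0 ∧ {C : Mat n | mev C p ≠ 0} ⊆ U := by
  induction hU' with
  | basic V hV =>
    obtain ⟨p, rfl⟩ := hV
    exact fun B hB => ⟨p, hB, fun C hC => hC⟩
  | univ => exact fun B _ => ⟨1, by simp [mev], fun _ _ => trivial⟩
  | inter U V hUo hVo ihU ihV =>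
    intro B hB
    obtain ⟨p, hp, hps⟩ := ihU B hB.1
    obtain ⟨q, hq, hqs⟩ := ihV B hB.2
    refine ⟨p * q, ?_, fun C hC => ?_⟩
    · simp only [mev, map_mul] at *
      exact mul_ne_zero hp hq
    · simp only [mev, map_mul, Set.mem_setOf_eq, mul_ne_zero_iff] at hC
      exact ⟨hps hC.1, hqs hC.2⟩
  | sUnion Us hUs ih =>
    rintro B ⟨V, hV, hBV⟩
    obtain ⟨p, hp, hps⟩ := ih V hV B hBV
    exact ⟨p, hp, hps.trans (Set.subset_sUnion_of_mem hV)⟩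

lemma exists_basic_nhd {U : Set (Mat n)} (hU : @IsOpen _ (matrixZariskiTopology n) U)
    {A : Mat n} (hA : A ∈ U) :
    ∃ p : MvPolynomial (Fin n × Fin n) ℂ, mev A p ≠ 0 ∧ {B : Mat n | mev B p ≠ 0} ⊆ U :=
  exists_basic_nhd' hU A hA


lemma mev_curve (q : Fin n × Fin n → Polynomial ℂ) (p : MvPolynomial (Fin n × Fin n) ℂ) (t : ℂ) :
    mev (Matrix.of fun i j => (q (i, j)).eval t) p
      = Polynomial.eval t (MvPolynomial.aeval q p) := by
  induction p using MvPolynomial.induction_on with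
  | C a => simp [mev]
  | add p p' hp hp' => simp only [mev, map_add, Polynomial.eval_add] at *; rw [hp, hp']
  | mul_X p i hp => simp only [mev, map_mul, Polynomial.eval_mul, MvPolynomial.eval_X,
      MvPolynomial.aeval_X] at *; rw [hp]; simp [Matrix.of_apply]

lemma eval_bind (g : Fin n × Fin n → ℂ) (Φ : Fin n × Fin n → MvPolynomial (Fin n × Fin n) ℂ)
    (p : MvPolynomial (Fin n × Fin n) ℂ) :
    MvPolynomial.eval (fun ij => MvPolynomial.eval g (Φ ij)) p
      = MvPolynomial.eval g (MvPolynomial.bind₁ Φ p) := by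
  induction p using MvPolynomial.induction_on with
  | C a => simp
  | add p p' hp hp' => simp only [map_add] at *; rw [hp, hp']
  | mul_X p i hp => simp only [map_mul, MvPolynomial.eval_X, MvPolynomial.bind₁_X_right] at *
                    rw [hp]

lemma continuous_polyMap (Φ : Fin n × Fin n → MvPolynomial (Fin n × Fin n) ℂ) :
    @Continuous _ _ (matrixZariskiTopology n) (matrixZariskiTopology n)
      (fun A : Mat n => (Matrix.of fun i j => mev A (Φ (i, j)) : Mat n)) := by
  letI := matrixZariskiTopology n
  conv => rw [matrixZariskiTopology]
  rw [continuous_generateFrom_iff]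
  rintro U ⟨p, rfl⟩
  have : (fun A : Mat n => (Matrix.of fun i j => mev A (Φ (i, j)) : Mat n)) ⁻¹'
      {A : Mat n | MvPolynomial.eval (fun ij => A ij.1 ij.2) p ≠ 0}
      = {A : Mat n | mev A (MvPolynomial.bind₁ Φ p) ≠ 0} := by
    ext A
    simp only [Set.mem_preimage, Set.mem_setOf_eq, mev, Matrix.of_apply]
    rw [← eval_bind]
  rw [this]
  exact basic_open _

lemma polyRange_preconnected (q : Fin n × Fin n → Polynomial ℂ) :
    @IsPreconnected _ (matrixZariskiTopology n)
      (Set.range fun t : ℂ => (Matrix.of fun i j => (q (i, j)).eval t : Mat n)) := by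
  letI := matrixZariskiTopology n
  apply IsPreirreducible.isPreconnected
  rintro u v hu hv ⟨x, ⟨s, rfl⟩, hxu⟩ ⟨y, ⟨w, rfl⟩, hyv⟩
  obtain ⟨p, hp, hps⟩ := exists_basic_nhd hu hxu
  obtain ⟨p', hp', hps'⟩ := exists_basic_nhd hv hyv
  rw [mev_curve] at hp hp'
  have hP : MvPolynomial.aeval q p * MvPolynomial.aeval q p' ≠ 0 :=
    mul_ne_zero (fun h => hp (by rw [h]; simp)) (fun h => hp' (by rw [h]; simp))
  have : ∃ t : ℂ, Polynomial.eval t (MvPolynomial.aeval q p * MvPolynomial.aeval q p') ≠ 0 := by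
    by_contra h
    push_neg at h
    exact hP (Polynomial.funext fun r => by rw [h r, Polynomial.eval_zero])
  obtain ⟨t, ht⟩ := this
  rw [Polynomial.eval_mul, mul_ne_zero_iff] at ht
  exact ⟨_, ⟨t, rfl⟩, hps (by rw [Set.mem_setOf_eq, mev_curve]; exact ht.1),
    hps' (by rw [Set.mem_setOf_eq, mev_curve]; exact ht.2)⟩

lemma polyRange_subset_closure (q : Fin n × Fin n → Polynomial ℂ) (D : Set (Mat n))
    (hD : ∀ m : ℕ, (Matrix.of fun i j => (q (i, j)).eval (m : ℂ) : Mat n) ∈ D) (t : ℂ) :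
    (Matrix.of fun i j => (q (i, j)).eval t : Mat n) ∈ @closure _ (matrixZariskiTopology n) D := by
  letI := matrixZariskiTopology n
  rw [mem_closure_iff]
  intro o ho hto
  obtain ⟨p, hp, hps⟩ := exists_basic_nhd ho hto
  rw [mev_curve] at hp
  by_contra h
  have hall : ∀ m : ℕ, Polynomial.eval (m : ℂ) (MvPolynomial.aeval q p) = 0 := by
    intro m
    by_contra hm
    exact h ⟨_, hps (by rw [Set.mem_setOf_eq, mev_curve]; exact hm), hD m⟩
  have hz : MvPolynomial.aeval q p = 0 := by
    apply Polynomial.eq_zero_of_infinite_isRoot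
    refine Set.Infinite.mono ?_ (Set.infinite_range_of_injective
      (Nat.cast_injective : Function.Injective (Nat.cast : ℕ → ℂ)))
    rintro _ ⟨m, rfl⟩
    exact hall m
  rw [hz] at hp
  simp at hp

noncomputable def curvePoly (N : Mat n) (K : ℕ) (ij : Fin n × Fin n) : Polynomial ℂ :=
  ∑ k ∈ Finset.range K,
    Polynomial.C ((N ^ k) ij.1 ij.2 / (k.factorial : ℂ)) * descPochhammer ℂ k

lemma curve_eval (N : Mat n) (K : ℕ) (t : ℂ) :
    (Matrix.of fun i j => ((curvePoly N K (i, j)).eval t) : Mat n)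
      = ∑ k ∈ Finset.range K, (((descPochhammer ℂ k).eval t) / (k.factorial : ℂ)) • N ^ k := by
  ext i j
  simp only [Matrix.of_apply, curvePoly, Polynomial.eval_finset_sum, Polynomial.eval_mul,
    Polynomial.eval_C, Matrix.sum_apply, Matrix.smul_apply, smul_eq_mul]
  refine Finset.sum_congr rfl fun k _ => ?_
  ring

lemma curve_nat (N : Mat n) {K : ℕ} (hK : N ^ K = 0) (m : ℕ) :
    (Matrix.of fun i j => ((curvePoly N K (i, j)).eval (m : ℂ)) : Mat n) = (N + 1) ^ m := by
  rw [curve_eval]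
  have h1 : ∀ k : ℕ, ((descPochhammer ℂ k).eval ((m : ℕ) : ℂ)) / (k.factorial : ℂ)
      = (m.choose k : ℂ) := by
    intro k
    rw [descPochhammer_eval_eq_descFactorial, Nat.descFactorial_eq_factorial_mul_choose]
    rw [Nat.cast_mul, mul_comm, mul_div_assoc, div_self (by exact_mod_cast k.factorial_ne_zero),
      mul_one]
  have h2 : (N + 1) ^ m = ∑ k ∈ Finset.range (m + 1), (m.choose k : ℂ) • N ^ k := by
    rw [Commute.add_pow (Commute.one_right N)]
    refine Finset.sum_congr rfl fun k _ => ?_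
    rw [one_pow, mul_one, Nat.cast_smul_eq_nsmul, nsmul_eq_mul]
    exact ((Nat.cast_commute (m.choose k) (N ^ k)).eq).symm
  simp only [h1, h2]
  have hsub1 : Finset.range K ⊆ Finset.range (K + (m + 1)) :=
    Finset.range_subset_range.mpr (Nat.le_add_right _ _)
  have hsub2 : Finset.range (m + 1) ⊆ Finset.range (K + (m + 1)) :=
    Finset.range_subset_range.mpr (Nat.le_add_left _ _)
  rw [Finset.sum_subset hsub1 (fun k _ hk => ?_), Finset.sum_subset hsub2 (fun k _ hk => ?_)]
  · rw [Nat.choose_eq_zero_of_lt (by simpa using hk), Nat.cast_zero, zero_smul]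
  · rw [pow_eq_zero_of_le (by simpa using hk) hK, smul_zero]

end ZarAux

open ZarAux in
/-- If a group `G` is generated by a set `S` of elements each acting unipotently
under a representation `ρ : G → GL(n, ℂ)`, then the Zariski closure of `ρ(G)` is
connected. -/
theorem zariski_closure_connected_of_unipotent_generators
    {G : Type*} [Group G] (n : ℕ) (ρ : G →* GL (Fin n) ℂ)
    (S : Set G) (hgen : Subgroup.closure S = ⊤)
    (huni : ∀ s ∈ S, IsNilpotent ((ρ s : Matrix (Fin n) (Fin n) ℂ) - 1)) :
    @IsConnected _ (matrixZariskiTopology n)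
      (@closure _ (matrixZariskiTopology n)
        (Set.range fun g : G => (ρ g : Matrix (Fin n) (Fin n) ℂ))) := by
  letI := matrixZariskiTopology n
  set R : Set (Mat n) := Set.range fun g : G => (ρ g : Mat n) with hR
  set X : Set (Mat n) := closure R with hX
  show IsConnected X
  have h1R : (1 : Mat n) ∈ R := ⟨1, by simp⟩
  -- continuity of left translations
  have contL : ∀ B : Mat n, Continuous (fun A : Mat n => B * A) := by
    intro B
    have h := continuous_polyMap
      (Φ := fun ij : Fin n × Fin n => ∑ k : Fin n,
        MvPolynomial.C (B ij.1 k) * MvPolynomial.X (k, ij.2))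
    convert h using 1
    funext A
    ext i j
    simp [mev, Matrix.mul_apply]
  have hXmul : ∀ a ∈ R, ∀ x ∈ X, a * x ∈ X := by
    rintro a ha x hx
    have himg : (fun y : Mat n => a * y) '' X ⊆ X := by
      refine (image_closure_subset_closure_image (contL a)).trans (closure_mono ?_)
      rintro _ ⟨_, ⟨g, rfl⟩, rfl⟩
      obtain ⟨g', rfl⟩ := ha
      exact ⟨g' * g, by simp⟩
    exact himg ⟨x, hx, rfl⟩
  have key : ∀ g : G, ∃ C : Set (Mat n),
      IsPreconnected C ∧ (1 : Mat n) ∈ C ∧ (ρ g : Mat n) ∈ C ∧ C ⊆ X := by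
    intro g
    have hg : g ∈ Subgroup.closure S := by rw [hgen]; trivial
    induction hg using Subgroup.closure_induction with
    | mem s hs =>
      obtain ⟨K, hK⟩ := huni s hs
      set N : Mat n := (ρ s : Mat n) - 1 with hN
      refine ⟨Set.range fun t : ℂ =>
        (Matrix.of fun i j => ((curvePoly N K (i, j)).eval t) : Mat n),
        polyRange_preconnected _, ⟨0, ?_⟩, ⟨1, ?_⟩, ?_⟩
      · have := curve_nat N hK 0
        simpa using this
      · have := curve_nat N hK 1
        simp only [Nat.cast_one, pow_one] at this
        show (Matrix.of fun i j => ((curvePoly N K (i, j)).eval 1) : Mat n) = _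
        rw [this, hN, sub_add_cancel]
      · rintro _ ⟨t, rfl⟩
        refine polyRange_subset_closure _ _ (fun m => ?_) t
        rw [curve_nat N hK m, hN, sub_add_cancel]
        exact ⟨s ^ m, by simp⟩
    | one => exact ⟨{1}, isPreconnected_singleton, rfl, by simp, by
        simpa using subset_closure h1R⟩
    | mul x y hx hy ihx ihy =>
      obtain ⟨Cx, hCx, h1x, hxx, hCxX⟩ := ihx
      obtain ⟨Cy, hCy, h1y, hyy, hCyX⟩ := ihy
      refine ⟨Cx ∪ (fun M : Mat n => (ρ x : Mat n) * M) '' Cy, ?_, Or.inl h1x, Or.inr ?_, ?_⟩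
      · exact IsPreconnected.union ((ρ x : Mat n)) hxx ⟨1, h1y, mul_one _⟩ hCx
          (hCy.image _ (contL _).continuousOn)
      · exact ⟨(ρ y : Mat n), hyy, by simp⟩
      · refine Set.union_subset hCxX ?_
        rintro _ ⟨M, hM, rfl⟩
        exact hXmul _ ⟨x, rfl⟩ _ (hCyX hM)
    | inv x hx ihx =>
      obtain ⟨Cx, hCx, h1x, hxx, hCxX⟩ := ihx
      refine ⟨(fun M : Mat n => (ρ x⁻¹ : Mat n) * M) '' Cx,
        hCx.image _ (contL _).continuousOn, ⟨(ρ x : Mat n), hxx, ?_⟩, ⟨1, h1x, mul_one _⟩, ?_⟩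
      · show (ρ x⁻¹ : Mat n) * (ρ x : Mat n) = 1
        rw [← Units.val_mul, ← map_mul, inv_mul_cancel, map_one, Units.val_one]
      · rintro _ ⟨M, hM, rfl⟩
        exact hXmul _ ⟨x⁻¹, rfl⟩ _ (hCxX hM)
  set 𝒞 : Set (Set (Mat n)) :=
    {C : Set (Mat n) | IsPreconnected C ∧ (1 : Mat n) ∈ C ∧ C ⊆ X} with h𝒞
  have hKpre : IsPreconnected (⋃₀ 𝒞) :=
    isPreconnected_sUnion 1 _ (fun s hs => hs.2.1) (fun s hs => hs.1)
  have hRK : R ⊆ ⋃₀ 𝒞 := by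
    rintro _ ⟨g, rfl⟩
    obtain ⟨C, h1, h2, h3, h4⟩ := key g
    exact ⟨C, ⟨h1, h2, h4⟩, h3⟩
  have hKX : ⋃₀ 𝒞 ⊆ X := Set.sUnion_subset fun s hs => hs.2.2
  have hXK : X = closure (⋃₀ 𝒞) :=
    subset_antisymm (closure_mono hRK) (closure_minimal hKX isClosed_closure)
  exact ⟨⟨1, subset_closure h1R⟩, hXK ▸ hKpre.closure⟩
end

section
/- Let π = ⟨x₁, y₁, ..., x_g, y_g | [x₁,y₁]⋯[x_g,y_g] = 1⟩ be a surface group acting trivially on H = C^{2g} with symplectic basis given by the classes [x_i], [y_i], with ⟨x_i, y_i⟩ = 1. Consider the C[π]-module C ⊕_φ H with π acting by g·(u,v) = (u + λ⟨ab(g), v⟩, v), where ab: π → H is the abelianization and λ ∈ C. Lifting the abelianization cocycle ab ∈ Z^1(π, H) by x_i ↦ (0, [x_i]), y_i ↦ (0, [y_i]), the expression Σ_{i=1}^{g} ((1 - y_i)·(0,[x_i]) + (x_i - 1)·(0,[y_i])) equals (2gλ, 0). -/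
/-- The connecting-map computation for the surface group: with the action of the
surface group `π` on `ℂ ⊕_φ H` given by `g • (u, v) = (u + λ⟨ab g, v⟩, v)`,
where `ab` is the abelianization and `⟨x_i, y_i⟩ = 1`, `⟨y_i, x_i⟩ = -1`, the
expression `Σ_i ((1 - y_i) • (0, [x_i]) + (x_i - 1) • (0, [y_i]))` equals
`(2gλ, 0)`. -/
theorem surface_group_connecting_map {π H : Type*} [Group π] [AddCommGroup H]
    [Module ℂ H] (g : ℕ) (ω : H →ₗ[ℂ] H →ₗ[ℂ] ℂ)
    (x y : Fin g → π) (ab : π → H) (lam : ℂ)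
    (hxy : ∀ i, ω (ab (x i)) (ab (y i)) = 1)
    (hyx : ∀ i, ω (ab (y i)) (ab (x i)) = -1)
    (act : π → (ℂ × H) → (ℂ × H))
    (hact : ∀ (p : π) (q : ℂ × H), act p q = (q.1 + lam * ω (ab p) q.2, q.2)) :
    (∑ i : Fin g,
        (((0, ab (x i)) : ℂ × H) - act (y i) (0, ab (x i))
          + (act (x i) (0, ab (y i)) - ((0, ab (y i)) : ℂ × H))))
      = ((2 * (g : ℂ) * lam, 0) : ℂ × H) := by
  have : ∀ i : Fin g,
      (((0, ab (x i)) : ℂ × H) - act (y i) (0, ab (x i))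
        + (act (x i) (0, ab (y i)) - ((0, ab (y i)) : ℂ × H))) = (2 * lam, 0) := by
    intro i
    simp [hact, hxy i, hyx i, Prod.ext_iff]
    ring
  rw [Finset.sum_congr rfl fun i _ => this i]
  simp [Prod.ext_iff]
  ring
end
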